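/- Let G be a countable discrete group acting partially on a compact Hausdorff space X via θ = ({X_t}, {h_t}). If the envelope space X^e = (G × X)/∼ (with the quotient topology, where G × X carries the product topology and G is discrete) is Hausdorff, then each X_t is closed in X (hence clopen). -/
import Mathlib


/-- A partial action of a group `G` on a set `X`. -/
structure PartialAction (G : Type*) [Group G] (X : Type*) where
  dom : G → Set X
  h : G → X → X
  dom_one : dom 1 = Set.univ
  h_one : ∀ x, h 1 x = x
  bijOn : ∀ t, Set.BijOn (h t) (dom t⁻¹) (dom t)
  image_inter : ∀ t s, h t '' (dom t⁻¹ ∩ dom s) = dom t ∩ dom (t * s)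
  hcomp : ∀ t s x, x ∈ dom s⁻¹ ∩ dom (s⁻¹ * t⁻¹) → h t (h s x) = h (t * s) x

/-- A topological partial action: the domains are open and each `h t` is a homeomorphism
of `X_{t⁻¹}` onto `X_t` (continuity of the inverse is `continuousOn t⁻¹`). -/
structure TopPartialAction (G : Type*) [Group G] (X : Type*) [TopologicalSpace X]
    extends PartialAction G X where
  isOpen_dom : ∀ t, IsOpen (dom t)
  continuousOn : ∀ t, ContinuousOn (h t) (dom t⁻¹)

/-- The relation `(r,x) ∼ (s,y) ↔ x ∈ X_{r⁻¹s} ∧ h_{s⁻¹r}(x) = y`. -/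
def PartialAction.rel {G X : Type*} [Group G] (θ : PartialAction G X) :
    G × X → G × X → Prop :=
  fun p q => p.2 ∈ θ.dom (p.1⁻¹ * q.1) ∧ θ.h (q.1⁻¹ * p.1) p.2 = q.2

/-- If the envelope space `X^e = (G × X)/∼` of a partial action of a countable discrete
group `G` on a compact Hausdorff space `X` is Hausdorff, then every `X_t` is closed
(hence clopen). -/
theorem isClosed_dom_of_t2_envelope {G X : Type*} [Group G] [Countable G]
    [TopologicalSpace G] [DiscreteTopology G]
    [TopologicalSpace X] [CompactSpace X] [T2Space X]
    (θ : TopPartialAction G X) (heq : Equivalence θ.toPartialAction.rel)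
    (hT2 : T2Space (Quotient (Setoid.mk θ.toPartialAction.rel heq))) :
    ∀ t : G, IsClosed (θ.dom t) ∧ IsClopen (θ.dom t) := by
  intro t
  haveI := hT2
  set s := Setoid.mk θ.toPartialAction.rel heq with hs
  let f : X → Quotient s := fun x => Quotient.mk s ((1 : G), x)
  let g : X → Quotient s := fun x => Quotient.mk s (t, x)
  have hf : Continuous f :=
    continuous_quotient_mk'.comp (continuous_const.prodMk continuous_id)
  have hg : Continuous g :=
    continuous_quotient_mk'.comp (continuous_const.prodMk continuous_id)
  have hrange : IsClosed (Set.range g) := (isCompact_range hg).isClosed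
  have hdom : θ.dom t = f ⁻¹' Set.range g := by
    ext x
    simp only [Set.mem_preimage, Set.mem_range]
    constructor
    · intro hx
      obtain ⟨y, hy, hyx⟩ := (θ.bijOn t).surjOn hx
      refine ⟨y, Quotient.sound ?_⟩
      exact ⟨by simpa using hy, by simpa using hyx⟩
    · rintro ⟨y, hy⟩
      obtain ⟨h1, h2⟩ := Quotient.exact hy
      have hx : x ∈ θ.h t '' θ.dom t⁻¹ := ⟨y, by simpa using h1, by simpa using h2⟩
      rwa [(θ.bijOn t).image_eq] at hx
  have hclosed : IsClosed (θ.dom t) := hdom ▸ hrange.preimage hf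
  exact ⟨hclosed, hclosed, θ.isOpen_dom t⟩
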